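/- If the service time distribution G with mean α is NBUE, i.e., ∫_t^∞ (1 − G(v)) dv ≤ α e^{−t/α} for all t ≥ 0, then the peakedness satisfies p ≤ (e^ρ − ρ − 1)/(ρ(e^ρ − 1)), the peakedness of the exponential service distribution with the same mean. -/

import Mathlib

open Real MeasureTheory Set Filter Topology

/-!
NBUE says that the integrated survival function `∫₀ᵗ (1 - G)` dominates that of the exponential
distribution with the same mean, `α (1 - e^{-t/α})`. Hence the integrand in the peakedness formula
is pointwise at most the exponential-service one, whose integral is computed in closed form as
`(1 - e^{-ρ}) / λ`, and the peakedness formula is increasing in that integral.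
-/

theorem le_intervalIntegral_of_integral_Ioi_le {h : ℝ → ℝ} {α t : ℝ}
    (hint : IntegrableOn h (Ioi 0)) (hmean : ∫ v in Ioi 0, h v = α) (ht : 0 ≤ t)
    (htail : ∫ v in Ioi t, h v ≤ α * exp (-(t / α))) :
    α * (1 - exp (-(t / α))) ≤ ∫ v in 0..t, h v := by
  rw [← intervalIntegral.integral_Ioi_sub_Ioi hint ht, hmean]
  linarith

theorem hasDerivAt_exp_mul_exp_neg_div {α ρ : ℝ} (hα : α ≠ 0) (hρ : ρ ≠ 0) (t : ℝ) :
    HasDerivAt (fun t => -(α / ρ) * exp (ρ * exp (-(t / α)) - ρ))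
      (exp (-(t / α) - ρ * (1 - exp (-(t / α))))) t := by
  have hinner : HasDerivAt (fun t : ℝ => -(t / α)) (-(1 / α)) t := by
    simpa using ((hasDerivAt_id t).div_const α).fun_neg
  refine (((hinner.exp.const_mul ρ).sub_const ρ).exp.const_mul (-(α / ρ))).congr_deriv ?_
  rw [show -(t / α) - ρ * (1 - exp (-(t / α))) = (ρ * exp (-(t / α)) - ρ) + -(t / α) by ring,
    exp_add]
  field_simp

theorem integral_Ioi_exp_neg_div_sub_mul_one_sub_exp {α ρ : ℝ} (hα : 0 < α) (hρ : ρ ≠ 0) :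
    IntegrableOn (fun t => exp (-(t / α) - ρ * (1 - exp (-(t / α))))) (Ioi 0) ∧
      ∫ t in Ioi 0, exp (-(t / α) - ρ * (1 - exp (-(t / α)))) = α / ρ * (1 - exp (-ρ)) := by
  have hderiv : ∀ t ∈ Ici (0 : ℝ), HasDerivAt _ _ t :=
    fun t _ => hasDerivAt_exp_mul_exp_neg_div hα.ne' hρ t
  have hnonneg : ∀ t ∈ Ioi (0 : ℝ), 0 ≤ exp (-(t / α) - ρ * (1 - exp (-(t / α)))) :=
    fun t _ => (exp_pos _).le
  have hlim : Tendsto (fun t => -(α / ρ) * exp (ρ * exp (-(t / α)) - ρ)) atTop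
      (𝓝 (-(α / ρ) * exp (ρ * 0 - ρ))) := by
    have hdecay : Tendsto (fun t : ℝ => exp (-(t / α))) atTop (𝓝 0) :=
      tendsto_exp_atBot.comp (tendsto_neg_atTop_atBot.comp (tendsto_id.atTop_div_const hα))
    exact ((continuous_exp.tendsto _).comp ((hdecay.const_mul ρ).sub_const ρ)).const_mul _
  refine ⟨integrableOn_Ioi_deriv_of_nonneg' hderiv hnonneg hlim, ?_⟩
  rw [integral_Ioi_of_hasDerivAt_of_nonneg' hderiv hnonneg hlim]
  simp only [zero_div, neg_zero, exp_zero, mul_one, sub_self, mul_zero, zero_sub]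
  ring

theorem one_add_one_div_sub_one_div_one_sub_exp_neg {ρ : ℝ} (hρ : ρ ≠ 0) :
    1 + 1 / ρ - 1 / (1 - exp (-ρ)) = (exp ρ - ρ - 1) / (ρ * (exp ρ - 1)) := by
  have hexp : exp ρ - 1 ≠ 0 := sub_ne_zero.mpr (mt (exp_eq_one_iff ρ).mp hρ)
  rw [exp_neg]
  field_simp
  ring

theorem stmt_4_general (lam α ρ : ℝ) (G : ℝ → ℝ)
    (hlam : 0 < lam) (hα : 0 < α) (hρ : ρ = lam * α)
    (hGmono : Monotone G)
    (hGint : IntegrableOn (fun v => 1 - G v) (Ioi 0))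
    (hGmean : (∫ v in Ioi (0:ℝ), (1 - G v)) = α)
    (hNBUE : ∀ t ≥ (0:ℝ), (∫ v in Ioi t, (1 - G v)) ≤ α * Real.exp (-(t / α))) :
    1 + 1 / ρ -
        1 / (lam * ∫ t in Ioi (0:ℝ),
          Real.exp (-(t / α) - lam * ∫ v in (0:ℝ)..t, (1 - G v))) ≤
    (Real.exp ρ - ρ - 1) / (ρ * (Real.exp ρ - 1)) := by
  have hρpos : 0 < ρ := hρ ▸ mul_pos hlam hα
  set f := fun t => exp (-(t / α) - lam * ∫ v in (0:ℝ)..t, (1 - G v))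
  set g := fun t => exp (-(t / α) - ρ * (1 - exp (-(t / α))))
  obtain ⟨hgint, hgval⟩ := integral_Ioi_exp_neg_div_sub_mul_one_sub_exp hα hρpos.ne'
  have hfg : ∀ t ∈ Ioi (0 : ℝ), f t ≤ g t := fun t ht => by
    have := le_intervalIntegral_of_integral_Ioi_le hGint hGmean (le_of_lt ht) (hNBUE t ht.le)
    refine exp_le_exp.mpr (sub_le_sub_left ?_ _)
    rw [hρ, mul_assoc]
    exact mul_le_mul_of_nonneg_left this hlam.le
  have hfcont : Continuous f := by
    have := intervalIntegral.continuous_primitive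
      (fun _ _ => Antitone.intervalIntegrable (μ := volume) fun _ _ h => sub_le_sub_left (hGmono h) 1) 0
    fun_prop
  have hfint : IntegrableOn f (Ioi 0) := hgint.mono' hfcont.aestronglyMeasurable <| by
    filter_upwards [ae_restrict_mem measurableSet_Ioi] with t ht
    rw [norm_of_nonneg (exp_pos _).le]
    exact hfg t ht
  have hIpos : 0 < lam * ∫ t in Ioi 0, f t := by
    have : NeZero (volume.restrict (Ioi (0 : ℝ))) := ⟨by simp⟩
    exact mul_pos hlam (integral_exp_pos hfint)
  have hIle : lam * ∫ t in Ioi 0, f t ≤ 1 - exp (-ρ) := by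
    calc lam * ∫ t in Ioi 0, f t ≤ lam * ∫ t in Ioi 0, g t :=
          mul_le_mul_of_nonneg_left (setIntegral_mono_on hfint hgint measurableSet_Ioi hfg) hlam.le
      _ = 1 - exp (-ρ) := by rw [hgval, hρ]; field_simp
  rw [← one_add_one_div_sub_one_div_one_sub_exp_neg hρpos.ne']
  gcongr

/-- If the service time distribution `G` with mean `α` is NBUE, i.e.
`∫_t^∞ (1 - G(v)) dv ≤ α e^{-t/α}` for all `t ≥ 0`, then the peakedness
satisfies `p ≤ (e^ρ - ρ - 1)/(ρ(e^ρ - 1))`. -/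
theorem stmt_4 (lam α ρ : ℝ) (G : ℝ → ℝ)
    (hlam : 0 < lam) (hα : 0 < α) (hρ : ρ = lam * α)
    (hGmono : Monotone G) (hG0 : ∀ t, 0 ≤ G t) (hG1 : ∀ t, G t ≤ 1)
    (hGint : IntegrableOn (fun v => 1 - G v) (Ioi 0))
    (hGmean : (∫ v in Ioi (0:ℝ), (1 - G v)) = α)
    (hNBUE : ∀ t ≥ (0:ℝ), (∫ v in Ioi t, (1 - G v)) ≤ α * Real.exp (-(t / α))) :
    1 + 1 / ρ -
        1 / (lam * ∫ t in Ioi (0:ℝ),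
          Real.exp (-(t / α) - lam * ∫ v in (0:ℝ)..t, (1 - G v))) ≤
    (Real.exp ρ - ρ - 1) / (ρ * (Real.exp ρ - 1)) :=
  stmt_4_general lam α ρ G hlam hα hρ hGmono hGint hGmean hNBUE
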